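/- Let $y>0$ and $d>\sqrt y$. At $z=\theta(d)=1+d+y+y/d$, with $m_1(z)=-1/(d+y)$ and $m_2(z)=-1/(d+1)$ the branches of the MP and companion MP Stieltjes transforms, and derivatives computed by implicit differentiation of their self-consistent equations, one has $\big(z m_2(z) m_1(z)^2\big)' = \frac{2d+y}{(d+y)^2(d^2-y)}$, where $'$ denotes $d/dz$ evaluated at $z=\theta(d)$. -/

import Mathlib

/-!
Differentiating the self-consistent equation `z a m² + (z + b) m + 1 = 0` gives
`m' (2 a z m + z + b) = -(a m² + m)`. At `z = θ(d)` the coefficient of `m'` is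
`(d² - y)/d` for both branches, which is nonzero because `d > √y`; this yields
`m₁' = d² / ((d+y)² (d² - y))` and `m₂' = d² / ((d+1)² (d² - y))`, and the product rule
finishes the computation.
-/

open Filter Topology

section ImplicitDerivative

variable {𝕜 : Type*} [NontriviallyNormedField 𝕜]

theorem deriv_mul_eq_of_eventually_quadratic {m : 𝕜 → 𝕜} {z₀ a b : 𝕜}
    (hm : DifferentiableAt 𝕜 m z₀)
    (h : ∀ᶠ z in 𝓝 z₀, z * a * m z ^ 2 + (z + b) * m z + 1 = 0) :
    deriv m z₀ * (2 * a * z₀ * m z₀ + z₀ + b) = -(a * m z₀ ^ 2 + m z₀) := by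
  have hF := ((((hasDerivAt_id z₀).mul_const a).mul (hm.hasDerivAt.pow 2)).add
    (((hasDerivAt_id z₀).add_const b).mul hm.hasDerivAt)).add_const (1 : 𝕜)
  have hzero : HasDerivAt (fun z => z * a * m z ^ 2 + (z + b) * m z + 1) 0 z₀ :=
    (hasDerivAt_const z₀ (0 : 𝕜)).congr_of_eventuallyEq h
  have := hF.unique hzero
  simp only [id_eq, Pi.pow_apply, Nat.cast_ofNat] at this
  linear_combination this

theorem hasDerivAt_id_mul_mul_sq {f g : 𝕜 → 𝕜} {f' g' z : 𝕜}
    (hf : HasDerivAt f f' z) (hg : HasDerivAt g g' z) :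
    HasDerivAt (fun w => w * g w * f w ^ 2)
      (g z * f z ^ 2 + z * g' * f z ^ 2 + 2 * z * g z * f z * f') z := by
  have := ((hasDerivAt_id z).mul hg).mul (hf.pow 2)
  simp only [Pi.mul_apply, Pi.pow_apply, id_eq, Nat.cast_ofNat] at this
  exact this.congr_deriv (by ring)

end ImplicitDerivative

/-- The paper's `θ(d)`. -/
noncomputable def spikeLocation (d y : ℂ) : ℂ := 1 + d + y + y / d

section SpikeLocation

variable {d y : ℂ}

theorem mp_deriv_at_spikeLocation (hd : d ≠ 0) (hsq : d ^ 2 - y ≠ 0) (hdy : d + y ≠ 0)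
    {m' : ℂ}
    (h : m' * (2 * y * spikeLocation d y * -(1 / (d + y)) + spikeLocation d y + -(1 - y))
      = -(y * (-(1 / (d + y))) ^ 2 + -(1 / (d + y)))) :
    m' = d ^ 2 / ((d + y) ^ 2 * (d ^ 2 - y)) := by
  unfold spikeLocation at h
  field_simp at h
  field_simp
  linear_combination h

theorem companion_deriv_at_spikeLocation (hd : d ≠ 0) (hsq : d ^ 2 - y ≠ 0)
    (hd1 : d + 1 ≠ 0) {m' : ℂ}
    (h : m' * (2 * 1 * spikeLocation d y * -(1 / (d + 1)) + spikeLocation d y + (1 - y))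
      = -(1 * (-(1 / (d + 1))) ^ 2 + -(1 / (d + 1)))) :
    m' = d ^ 2 / ((d + 1) ^ 2 * (d ^ 2 - y)) := by
  unfold spikeLocation at h
  field_simp at h
  field_simp
  linear_combination h

theorem spikeLocation_mul_mul_sq_deriv (hd : d ≠ 0) (hsq : d ^ 2 - y ≠ 0) (hdy : d + y ≠ 0)
    (hd1 : d + 1 ≠ 0) :
    -(1 / (d + 1)) * (-(1 / (d + y))) ^ 2
      + spikeLocation d y * (d ^ 2 / ((d + 1) ^ 2 * (d ^ 2 - y))) * (-(1 / (d + y))) ^ 2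
      + 2 * spikeLocation d y * -(1 / (d + 1)) * -(1 / (d + y))
        * (d ^ 2 / ((d + y) ^ 2 * (d ^ 2 - y)))
      = (2 * d + y) / ((d + y) ^ 2 * (d ^ 2 - y)) := by
  unfold spikeLocation
  field_simp
  ring

end SpikeLocation

/-- Let `y > 0`, `d > √y`, and `θd = θ(d) = 1 + d + y + y/d`. If `m₁, m₂ : ℂ → ℂ` satisfy
the MP and companion self-consistent equations near `θd`, are differentiable at `θd`, with
`m₁(θd) = -1/(d+y)` and `m₂(θd) = -1/(d+1)`, then
`(z m₂(z) m₁(z)²)'|_{z=θd} = (2d + y) / ((d+y)² (d² - y))`. -/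
theorem zm2m1sq_deriv (y d : ℝ) (hy : 0 < y) (hd : Real.sqrt y < d)
    (θd : ℂ) (hθ : θd = 1 + (d : ℂ) + (y : ℂ) + (y : ℂ) / (d : ℂ))
    (m1 m2 : ℂ → ℂ)
    (hval1 : m1 θd = -(1 / ((d : ℂ) + (y : ℂ))))
    (hval2 : m2 θd = -(1 / ((d : ℂ) + 1)))
    (heq1 : ∀ᶠ z in nhds θd,
      z * (y : ℂ) * (m1 z) ^ 2 + (z - (1 - (y : ℂ))) * m1 z + 1 = 0)
    (heq2 : ∀ᶠ z in nhds θd,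
      z * (m2 z) ^ 2 + (z + (1 - (y : ℂ))) * m2 z + 1 = 0)
    (hdiff1 : DifferentiableAt ℂ m1 θd) (hdiff2 : DifferentiableAt ℂ m2 θd) :
    deriv (fun z => z * m2 z * (m1 z) ^ 2) θd
      = (2 * (d : ℂ) + (y : ℂ)) / ((((d : ℂ) + (y : ℂ)) ^ 2) * ((d : ℂ) ^ 2 - (y : ℂ))) := by
  have hd0 : 0 < d := (Real.sqrt_nonneg y).trans_lt hd
  have hd0' : (d : ℂ) ≠ 0 := mod_cast hd0.ne'
  have hsq : (d : ℂ) ^ 2 - y ≠ 0 := mod_cast (sub_pos.2 (Real.lt_sq_of_sqrt_lt hd)).ne'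
  have hdy : (d : ℂ) + y ≠ 0 := mod_cast (add_pos hd0 hy).ne'
  have hd1 : (d : ℂ) + 1 ≠ 0 := mod_cast (add_pos hd0 one_pos).ne'
  have E1 := deriv_mul_eq_of_eventually_quadratic (a := (y : ℂ)) (b := -(1 - (y : ℂ))) hdiff1
    (heq1.mono fun z hz => by linear_combination hz)
  have E2 := deriv_mul_eq_of_eventually_quadratic (a := 1) (b := 1 - (y : ℂ)) hdiff2
    (heq2.mono fun z hz => by linear_combination hz)
  subst hθ
  rw [hval1] at E1
  rw [hval2] at E2
  have hm1 := mp_deriv_at_spikeLocation hd0' hsq hdy E1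
  have hm2 := companion_deriv_at_spikeLocation hd0' hsq hd1 E2
  rw [(hasDerivAt_id_mul_mul_sq hdiff1.hasDerivAt hdiff2.hasDerivAt).deriv,
    hval1, hval2, hm1, hm2]
  exact spikeLocation_mul_mul_sq_deriv hd0' hsq hdy hd1
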